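/- Every element of the point group of a cluster belongs to its sticky symmetry group: if (P, δ) ∈ P(N) × C_2 and there exists R ∈ SO(3) with δ(P ⊗ I_3)x = (R ⊗ I_N)x (i.e. applying R to each x_i ∈ ℝ^3), then there is a continuous path φ : [0,1] → M_A with φ(0) = x and φ(1) = δ(P ⊗ I_3)x; hence P_x ⊆ T_x. -/

import Mathlib

/-!
A rotation `R ∈ SO(3)` has an axis, because in odd dimension
`det (R - 1) = det (Rᵀ (1 - R)) = -det (R - 1)`. Conjugating by an orthogonal `Q` whose first
column spans the axis turns `R` into the rotation `rotX θ` about the first coordinate axis, so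
`φ ↦ Q * rotX φ * Qᵀ` joins `1` to `R` inside `SO(3)`. Orthogonal matrices are isometries, so
moving all sphere centres along this path of rotations preserves every pair distance and the
configuration stays in `M_A`.
-/

abbrev Config (N : ℕ) := Fin N → EuclideanSpace ℝ (Fin 3)

def MSet (N : ℕ) (r : ℝ) (A : Fin N → Fin N → Prop) : Set (Config N) :=
  {y | ∀ i j, i ≠ j →
    (A i j → dist (y i) (y j) = 2 * r) ∧ (¬ A i j → 2 * r < dist (y i) (y j))}

theorem Real.exists_cos_sin_eq_of_sq_add_sq_eq_one {a b : ℝ} (h : a ^ 2 + b ^ 2 = 1) :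
    ∃ θ, Real.cos θ = a ∧ Real.sin θ = b := by
  have hz : ‖(⟨a, b⟩ : ℂ)‖ = 1 := by
    rw [Complex.norm_def, Complex.normSq_mk, ← sq, ← sq, h, Real.sqrt_one]
  obtain ⟨θ, hθ⟩ := (Complex.norm_eq_one_iff _).mp hz
  exact ⟨θ, by simpa using congrArg Complex.re hθ, by simpa using congrArg Complex.im hθ⟩

namespace Matrix

variable {n : Type*} [Fintype n] [DecidableEq n]

theorem isometry_toEuclideanLin_of_mem_orthogonalGroup {R : Matrix n n ℝ}
    (hR : R ∈ orthogonalGroup n ℝ) : Isometry (toEuclideanLin R) := by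
  refine AddMonoidHomClass.isometry_of_norm _ fun v => ?_
  have hU : toEuclideanCLM (𝕜 := ℝ) (n := n) R ∈ unitary _ :=
    Unitary.map_mem (toEuclideanCLM (𝕜 := ℝ) (n := n)) hR
  exact ContinuousLinearMap.norm_map_of_mem_unitary hU v

theorem det_sub_one_eq_zero_of_mem_specialOrthogonalGroup {R : Matrix n n ℝ}
    (hR : R ∈ specialOrthogonalGroup n ℝ) (hn : Odd (Fintype.card n)) : (R - 1).det = 0 := by
  obtain ⟨hO, hdet⟩ := mem_specialOrthogonalGroup_iff.mp hR
  have hRR : Rᵀ * R = 1 := (mem_orthogonalGroup_iff' n ℝ).mp hO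
  have hneg : (R - 1).det = -(R - 1).det :=
    calc (R - 1).det = (Rᵀ * -(R - 1)).det := by
          rw [← det_transpose, mul_neg, mul_sub, hRR, mul_one, neg_sub, transpose_sub,
            transpose_one]
      _ = -(R - 1).det := by rw [det_mul, det_transpose, hdet, det_neg, hn.neg_one_pow]; ring
  linarith

theorem exists_mulVec_eq_self_of_mem_specialOrthogonalGroup {R : Matrix n n ℝ}
    (hR : R ∈ specialOrthogonalGroup n ℝ) (hn : Odd (Fintype.card n)) :
    ∃ v ≠ 0, R *ᵥ v = v := by
  obtain ⟨v, hv, hRv⟩ := exists_mulVec_eq_zero_iff.mpr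
    (det_sub_one_eq_zero_of_mem_specialOrthogonalGroup hR hn)
  exact ⟨v, hv, by rwa [sub_mulVec, one_mulVec, sub_eq_zero] at hRv⟩

theorem exists_mem_orthogonalGroup_col_eq {u : EuclideanSpace ℝ n} (hu : ‖u‖ = 1) (i : n) :
    ∃ Q ∈ orthogonalGroup n ℝ, Q.col i = u := by
  have horth : Orthonormal ℝ (({i} : Set n).domRestrict fun _ => u) := by
    refine ⟨fun _ => hu, fun j k hjk => (hjk ?_).elim⟩
    exact Subtype.ext (j.2.trans k.2.symm)
  obtain ⟨b, hb⟩ := horth.exists_orthonormalBasis_extension_of_card_eq finrank_euclideanSpace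
  refine ⟨_, (EuclideanSpace.basisFun n ℝ).toMatrix_orthonormalBasis_mem_orthogonal b, ?_⟩
  ext j
  simp [Module.Basis.toMatrix_apply, hb i rfl]

theorem transpose_mem_orthogonalGroup {Q : Matrix n n ℝ} (hQ : Q ∈ orthogonalGroup n ℝ) :
    Qᵀ ∈ orthogonalGroup n ℝ := by
  rw [mem_orthogonalGroup_iff', transpose_transpose]
  exact (mem_orthogonalGroup_iff n ℝ).mp hQ

theorem mul_mul_transpose_mem_specialOrthogonalGroup {Q S : Matrix n n ℝ}
    (hQ : Q ∈ orthogonalGroup n ℝ) (hS : S ∈ specialOrthogonalGroup n ℝ) :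
    Q * S * Qᵀ ∈ specialOrthogonalGroup n ℝ := by
  obtain ⟨hSO, hdet⟩ := mem_specialOrthogonalGroup_iff.mp hS
  refine mem_specialOrthogonalGroup_iff.mpr
    ⟨mul_mem (mul_mem hQ hSO) (transpose_mem_orthogonalGroup hQ), ?_⟩
  rw [det_mul, det_mul, hdet, mul_one, ← det_mul, (mem_orthogonalGroup_iff n ℝ).mp hQ, det_one]

noncomputable def rotX (θ : ℝ) : Matrix (Fin 3) (Fin 3) ℝ :=
  !![1, 0, 0; 0, Real.cos θ, -Real.sin θ; 0, Real.sin θ, Real.cos θ]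

theorem rotX_zero : rotX 0 = 1 := by
  ext i j; fin_cases i <;> fin_cases j <;> simp [rotX]

theorem continuous_rotX : Continuous rotX := by
  unfold rotX; fun_prop

theorem rotX_mem_specialOrthogonalGroup (θ : ℝ) :
    rotX θ ∈ specialOrthogonalGroup (Fin 3) ℝ := by
  refine mem_specialOrthogonalGroup_iff.mpr ⟨(mem_orthogonalGroup_iff' _ _).mpr ?_, ?_⟩
  · ext i j
    fin_cases i <;> fin_cases j <;> simp [rotX, mul_apply, Fin.sum_univ_three, ← sq, mul_comm]
  · simp [rotX, det_fin_three, ← sq]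

theorem exists_eq_rotX_of_col_zero {S : Matrix (Fin 3) (Fin 3) ℝ}
    (hS : S ∈ specialOrthogonalGroup (Fin 3) ℝ) (hcol : S.col 0 = Pi.single 0 1) :
    ∃ θ, S = rotX θ := by
  obtain ⟨hO, hdet⟩ := mem_specialOrthogonalGroup_iff.mp hS
  have hSS := (mem_orthogonalGroup_iff' _ _).mp hO
  have h00 : S 0 0 = 1 := by simpa using congrFun hcol 0
  have h10 : S 1 0 = 0 := by simpa using congrFun hcol 1
  have h20 : S 2 0 = 0 := by simpa using congrFun hcol 2
  have gram : ∀ i j, ∑ k, S k i * S k j = if i = j then 1 else 0 := fun i j => by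
    simpa [mul_apply, one_apply] using congrFun (congrFun hSS i) j
  have h01 : S 0 1 = 0 := by simpa [Fin.sum_univ_three, h00, h10, h20] using gram 0 1
  have h02 : S 0 2 = 0 := by simpa [Fin.sum_univ_three, h00, h10, h20] using gram 0 2
  have e11 : S 1 1 * S 1 1 + S 2 1 * S 2 1 = 1 := by
    simpa [Fin.sum_univ_three, h01] using gram 1 1
  have e12 : S 1 1 * S 1 2 + S 2 1 * S 2 2 = 0 := by
    simpa [Fin.sum_univ_three, h01, h02] using gram 1 2
  have hminor : S 1 1 * S 2 2 - S 1 2 * S 2 1 = 1 := by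
    simpa [det_fin_three, h00, h01, h02, h10, h20] using hdet
  have h12 : S 1 2 = -S 2 1 := by
    linear_combination S 1 1 * e12 - S 2 1 * hminor - S 1 2 * e11
  have h22 : S 2 2 = S 1 1 := by
    linear_combination S 2 1 * e12 + S 1 1 * hminor - S 2 2 * e11
  obtain ⟨θ, hcos, hsin⟩ :=
    Real.exists_cos_sin_eq_of_sq_add_sq_eq_one (a := S 1 1) (b := S 2 1)
      (by linear_combination e11)
  refine ⟨θ, ?_⟩
  ext i j
  fin_cases i <;> fin_cases j <;> simp [rotX, hcos, hsin, h00, h01, h02, h10, h20, h12, h22]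

theorem exists_mem_orthogonalGroup_eq_mul_rotX_mul_transpose {R : Matrix (Fin 3) (Fin 3) ℝ}
    (hR : R ∈ specialOrthogonalGroup (Fin 3) ℝ) :
    ∃ Q ∈ orthogonalGroup (Fin 3) ℝ, ∃ θ, R = Q * rotX θ * Qᵀ := by
  obtain ⟨v, hv, hRv⟩ := exists_mulVec_eq_self_of_mem_specialOrthogonalGroup hR (by decide)
  set u : EuclideanSpace ℝ (Fin 3) := ‖WithLp.toLp 2 v‖⁻¹ • WithLp.toLp 2 v
  have hRu : R *ᵥ u.ofLp = u.ofLp := by simp [u, mulVec_smul, hRv]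
  have hu : ‖u‖ = 1 := norm_smul_inv_norm (𝕜 := ℝ) (by simpa using hv)
  obtain ⟨Q, hQ, hQu⟩ := exists_mem_orthogonalGroup_col_eq hu 0
  have hQQ : Qᵀ * Q = 1 := (mem_orthogonalGroup_iff' _ _).mp hQ
  have hQQ' : Q * Qᵀ = 1 := (mem_orthogonalGroup_iff _ _).mp hQ
  have hS := mul_mul_transpose_mem_specialOrthogonalGroup (transpose_mem_orthogonalGroup hQ) hR
  rw [transpose_transpose] at hS
  have hcol : (Qᵀ * R * Q).col 0 = Pi.single 0 1 := by
    -- `Qᵀ R Q e₀ = Qᵀ R u = Qᵀ u = Qᵀ Q e₀ = e₀`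
    rw [← mulVec_single_one, ← mulVec_mulVec, ← mulVec_mulVec, mulVec_single_one, hQu, hRu,
      ← hQu, ← mulVec_single_one, mulVec_mulVec, hQQ, one_mulVec]
  obtain ⟨θ, hθ⟩ := exists_eq_rotX_of_col_zero hS hcol
  refine ⟨Q, hQ, θ, ?_⟩
  rw [← hθ, ← mul_assoc, ← mul_assoc, hQQ', one_mul, mul_assoc, hQQ', mul_one]

theorem isPathConnected_specialOrthogonalGroup_fin_three :
    IsPathConnected (specialOrthogonalGroup (Fin 3) ℝ : Set (Matrix (Fin 3) (Fin 3) ℝ)) := by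
  refine ⟨1, one_mem _, fun R hR => ?_⟩
  obtain ⟨Q, hQ, θ, rfl⟩ := exists_mem_orthogonalGroup_eq_mul_rotX_mul_transpose hR
  have hcont : Continuous fun φ => Q * rotX φ * Qᵀ :=
    (continuous_const.matrix_mul continuous_rotX).matrix_mul continuous_const
  refine ((isPathConnected_range hcont).joinedIn _ ⟨0, ?_⟩ _ ⟨θ, rfl⟩).mono ?_
  · change Q * rotX 0 * Qᵀ = 1
    rw [rotX_zero, mul_one, (mem_orthogonalGroup_iff _ _).mp hQ]
  · rintro _ ⟨φ, rfl⟩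
    exact mul_mul_transpose_mem_specialOrthogonalGroup hQ (rotX_mem_specialOrthogonalGroup φ)

end Matrix

open Matrix

theorem comp_mem_MSet_of_isometry {N : ℕ} {r : ℝ} {A : Fin N → Fin N → Prop} {x : Config N}
    {f : EuclideanSpace ℝ (Fin 3) → EuclideanSpace ℝ (Fin 3)} (hf : Isometry f)
    (hx : x ∈ MSet N r A) : f ∘ x ∈ MSet N r A := fun i j hij => by
  simpa only [Function.comp_apply, hf.dist_eq] using hx i j hij

theorem joinedIn_MSet_of_joinedIn_orthogonalGroup {N : ℕ} {r : ℝ} {A : Fin N → Fin N → Prop}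
    {x : Config N} (hx : x ∈ MSet N r A) {R : Matrix (Fin 3) (Fin 3) ℝ}
    (hR : JoinedIn (orthogonalGroup (Fin 3) ℝ) 1 R) :
    JoinedIn (MSet N r A) x (toEuclideanLin R ∘ x) := by
  have hcont : Continuous fun M : Matrix (Fin 3) (Fin 3) ℝ => toEuclideanLin M ∘ x :=
    continuous_pi fun i =>
      (PiLp.continuous_toLp 2 _).comp (continuous_id.matrix_mulVec continuous_const)
  have h1 : toEuclideanLin (1 : Matrix (Fin 3) (Fin 3) ℝ) ∘ x = x := by
    ext i : 1; simp
  have hsub : (fun M => toEuclideanLin M ∘ x) '' orthogonalGroup (Fin 3) ℝ ⊆ MSet N r A := by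
    rintro _ ⟨M, hM, rfl⟩
    exact comp_mem_MSet_of_isometry (isometry_toEuclideanLin_of_mem_orthogonalGroup hM) hx
  simpa only [h1] using (hR.map hcont).mono hsub

theorem point_group_subset_sticky_general (N : ℕ) (r : ℝ)
    (A : Fin N → Fin N → Prop) (x : Config N) (hx : x ∈ MSet N r A)
    (π : Equiv.Perm (Fin N)) (δ : ℝ)
    (R : Matrix (Fin 3) (Fin 3) ℝ) (hR : R ∈ Matrix.specialOrthogonalGroup (Fin 3) ℝ)
    (h : (fun i => δ • x (π⁻¹ i)) = fun i => Matrix.toEuclideanLin R (x i)) :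
    JoinedIn (MSet N r A) x (fun i => δ • x (π⁻¹ i)) := by
  rw [h]
  exact joinedIn_MSet_of_joinedIn_orthogonalGroup hx
    ((isPathConnected_specialOrthogonalGroup_fin_three.joinedIn 1 (one_mem _) R hR).mono
      specialUnitaryGroup_le_unitaryGroup)

/-- Every element of the point group belongs to the sticky symmetry group: if
`δ(P ⊗ I₃)x = (R ⊗ I_N)x` for a rotation `R ∈ SO(3)`, then there is a continuous path
in `M_A` from `x` to `δ(P ⊗ I₃)x`; hence `P_x ⊆ T_x`. -/
theorem point_group_subset_sticky (N : ℕ) (r : ℝ) (hr : 0 < r)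
    (A : Fin N → Fin N → Prop) (x : Config N) (hx : x ∈ MSet N r A)
    (π : Equiv.Perm (Fin N)) (δ : ℝ) (hδ : δ = 1 ∨ δ = -1)
    (R : Matrix (Fin 3) (Fin 3) ℝ) (hR : R ∈ Matrix.specialOrthogonalGroup (Fin 3) ℝ)
    (h : (fun i => δ • x (π⁻¹ i)) = fun i => Matrix.toEuclideanLin R (x i)) :
    JoinedIn (MSet N r A) x (fun i => δ • x (π⁻¹ i)) :=
  point_group_subset_sticky_general N r A x hx π δ R hR h
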